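/- arXiv:1801.04144 — 2 statements merged into one kernel-verified Lean document; each statement's English description precedes it below -/
import Mathlib

section
/- The phase-space cost c_ph((x,v),(y,w)) = 12|x−y|² + 4(|v|² + |w|² + ⟨v,w⟩ + 3⟨v+w, x−y⟩) on (ℝ^d × ℝ^d) × (ℝ^d × ℝ^d) is nonnegative, and it vanishes if and only if v = w and y = x + v (i.e., the boundary data lie on a common straight line traversed at constant speed). -/
open RealInnerProductSpace

noncomputable def cph {d : ℕ} (x v y w : EuclideanSpace ℝ (Fin d)) : ℝ :=
  12 * ‖x - y‖ ^ 2 + 4 * (‖v‖ ^ 2 + ‖w‖ ^ 2 + ⟪v, w⟫ + 3 * ⟪v + w, x - y⟫)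

theorem stmt_3 (d : ℕ) (x v y w : EuclideanSpace ℝ (Fin d)) :
    0 ≤ cph x v y w ∧ (cph x v y w = 0 ↔ v = w ∧ y = x + v) := by
  have key : cph x v y w = 12 * ‖(x - y) + (2:ℝ)⁻¹ • (v + w)‖ ^ 2 + ‖v - w‖ ^ 2 := by
    simp only [cph, ← real_inner_self_eq_norm_sq]
    simp only [inner_add_left, inner_add_right, inner_sub_left, inner_sub_right,
      real_inner_smul_left, real_inner_smul_right, real_inner_comm x y,
      real_inner_comm v w, real_inner_comm x v, real_inner_comm x w,
      real_inner_comm y v, real_inner_comm y w]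
    ring
  constructor
  · rw [key]; positivity
  · rw [key]
    constructor
    · intro h
      have h1 : ‖(x - y) + (2:ℝ)⁻¹ • (v + w)‖ ^ 2 = 0 ∧ ‖v - w‖ ^ 2 = 0 := by
        constructor <;> nlinarith [sq_nonneg ‖(x - y) + (2:ℝ)⁻¹ • (v + w)‖, sq_nonneg ‖v - w‖]
      have hvw : v = w := by
        have := h1.2
        rw [pow_eq_zero_iff (by norm_num), norm_eq_zero, sub_eq_zero] at this
        exact this
      refine ⟨hvw, ?_⟩
      have := h1.1
      rw [pow_eq_zero_iff (by norm_num), norm_eq_zero] at this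
      subst hvw
      have hv : (2:ℝ)⁻¹ • (v + v) = v := by
        rw [← two_smul ℝ v, smul_smul]; norm_num
      rw [hv] at this
      have : x - y + v = 0 := this
      have : y = x + v := by
        apply eq_of_sub_eq_zero
        abel_nf
        abel_nf at this
        linear_combination (norm := abel) -this
      exact this
    · rintro ⟨rfl, rfl⟩
      have hv : (2:ℝ)⁻¹ • (v + v) = v := by
        rw [← two_smul ℝ v, smul_smul]; norm_num
      rw [hv]
      have : x - (x + v) + v = 0 := by abel
      rw [this]
      simp
end

section
/- Let Ω_d ⊂ ℝ^d, Ω_p ⊂ ℝ^p be compact, and let π be a Borel probability measure on Ω_d × Ω_p whose first marginal μ = (p₁)_*π is atomless. Then π is the weak-* limit of a sequence of measures of the form (Id, T_m)_*μ, where each T_m : Ω_d → Ω_p is a Borel map with (T_m)_*μ = (p₂)_*π. In other words, transport plans induced by maps are weak-* dense among all plans with atomless first marginal. -/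
/-!
On the real line, the cdf of an atomless law pushes it to the uniform law on `(0, 1)`, and the
quantile function of any law pushes the uniform law back to it. Embedding standard Borel spaces
into `ℝ`, this transports an atomless law onto any law of the same mass by a measurable map.

Given `r > 0`, a measurable quantizer `s = e ∘ q` with countably many values moves each point of
the compact set `Ωd` by less than `r`. Transporting `μ`, restricted to each cell `q ⁻¹' {i}`, onto
the second marginal of `π` restricted to the same cell and gluing gives `T` with
`(s, T)_* μ = (s × id)_* π`. So `(Id, T)_* μ` and `π` are both within `r`, in the first coordinate,
of one common measure, and integrals of a test function, uniformly continuous near the compact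
support, converge as `r → 0`.
-/

open MeasureTheory Filter Set ProbabilityTheory
open scoped Topology

namespace ProbabilityTheory

/-- Only the values on `(0, 1)` matter: there the set is nonempty and bounded below, so `sInf` is
not a junk value. -/
noncomputable def quantile (ρ : Measure ℝ) (u : ℝ) : ℝ :=
  if u ∈ Ioo 0 1 then sInf {x | u ≤ cdf ρ x} else 0

section Quantile

variable (ρ : Measure ℝ)

theorem quantile_le_iff {u : ℝ} (hu : u ∈ Ioo 0 1) (t : ℝ) :
    quantile ρ u ≤ t ↔ u ≤ cdf ρ t := by
  set S := {x | u ≤ cdf ρ x}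
  have hS : S.Nonempty := ((tendsto_cdf_atTop ρ).eventually_const_lt hu.2).exists.imp
    fun _ hx => hx.le
  have hSbdd : BddBelow S := by
    obtain ⟨x₀, hx₀⟩ := ((tendsto_cdf_atBot ρ).eventually_lt_const hu.1).exists
    exact ⟨x₀, fun z hz => le_of_lt <| (monotone_cdf ρ).reflect_lt (hx₀.trans_le hz)⟩
  have hmem : sInf S ∈ S := by
    refine ge_of_tendsto ((cdf ρ).right_continuous _ |>.mono Ioi_subset_Ici_self)
      (eventually_nhdsWithin_of_forall fun x hx => ?_)
    obtain ⟨z, hz, hzx⟩ := (csInf_lt_iff hSbdd hS).1 hx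
    exact hz.trans (monotone_cdf ρ hzx.le)
  rw [quantile, if_pos hu]
  exact ⟨fun h => hmem.trans (monotone_cdf ρ h), fun h => csInf_le hSbdd h⟩

theorem measurable_quantile : Measurable (quantile ρ) := by
  have hmono : MonotoneOn (quantile ρ) (Ioo 0 1) := fun u hu v hv huv =>
    (quantile_le_iff ρ hu _).2 (huv.trans ((quantile_le_iff ρ hv _).1 le_rfl))
  refine measurable_of_restrict_of_restrict_compl measurableSet_Ioo
    (monotoneOn_iff_monotone.1 hmono).measurable ?_
  have : (Ioo (0 : ℝ) 1)ᶜ.domRestrict (quantile ρ) = fun _ => 0 :=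
    funext fun u => if_neg u.2
  rw [this]
  exact measurable_const

variable [IsProbabilityMeasure ρ]

theorem map_quantile : (volume.restrict (Ioo 0 1)).map (quantile ρ) = ρ := by
  have : IsProbabilityMeasure (volume.restrict (Ioo (0 : ℝ) 1)) := ⟨by simp⟩
  have : IsProbabilityMeasure ((volume.restrict (Ioo (0 : ℝ) 1)).map (quantile ρ)) :=
    Measure.isProbabilityMeasure_map (measurable_quantile ρ).aemeasurable
  refine Measure.ext_of_Iic _ _ fun t => ?_
  rw [Measure.map_apply (measurable_quantile ρ) measurableSet_Iic,
    Measure.restrict_apply (measurable_quantile ρ measurableSet_Iic), ← ofReal_cdf]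
  have hset : quantile ρ ⁻¹' Iic t ∩ Ioo 0 1 = Iic (cdf ρ t) ∩ Ioo 0 1 := by
    ext u
    simp only [mem_inter_iff, mem_preimage, mem_Iic, and_congr_left_iff]
    exact fun hu => quantile_le_iff ρ hu t
  rw [hset]
  refine le_antisymm ?_ ?_
  · calc volume (Iic (cdf ρ t) ∩ Ioo 0 1) ≤ volume (Ioc 0 (cdf ρ t)) :=
          measure_mono fun u hu => ⟨hu.2.1, hu.1⟩
      _ = ENNReal.ofReal (cdf ρ t) := by rw [Real.volume_Ioc, sub_zero]
  · calc ENNReal.ofReal (cdf ρ t) = volume (Ioo 0 (cdf ρ t)) := by rw [Real.volume_Ioo, sub_zero]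
      _ ≤ volume (Iic (cdf ρ t) ∩ Ioo 0 1) :=
          measure_mono fun u hu => ⟨hu.2.le, hu.1, hu.2.trans_le (cdf_le_one ρ t)⟩

variable [NullSingletonClass ρ]

theorem leftLim_cdf (x : ℝ) : Function.leftLim (cdf ρ) x = cdf ρ x := by
  have h := StieltjesFunction.measure_singleton (cdf ρ) x
  rw [measure_cdf, measure_singleton, eq_comm, ENNReal.ofReal_eq_zero, sub_nonpos] at h
  exact le_antisymm ((monotone_cdf ρ).leftLim_le le_rfl) h

theorem cdf_quantile {u : ℝ} (hu : u ∈ Ioo 0 1) : cdf ρ (quantile ρ u) = u := by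
  refine le_antisymm ?_ ((quantile_le_iff ρ hu _).1 le_rfl)
  rw [← leftLim_cdf]
  refine le_of_tendsto ((monotone_cdf ρ).tendsto_leftLim _)
    (eventually_nhdsWithin_of_forall fun x hx => ?_)
  exact le_of_lt <| not_le.1 fun h => (not_le.2 hx) ((quantile_le_iff ρ hu x).2 h)

theorem map_cdf : ρ.map (cdf ρ) = volume.restrict (Ioo 0 1) := calc
  ρ.map (cdf ρ) = ((volume.restrict (Ioo 0 1)).map (quantile ρ)).map (cdf ρ) := by
      rw [map_quantile]
  _ = (volume.restrict (Ioo 0 1)).map (cdf ρ ∘ quantile ρ) :=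
      Measure.map_map (monotone_cdf ρ).measurable (measurable_quantile ρ)
  _ = (volume.restrict (Ioo 0 1)).map id :=
      Measure.map_congr <| (ae_restrict_mem measurableSet_Ioo).mono fun u hu => cdf_quantile ρ hu
  _ = volume.restrict (Ioo 0 1) := Measure.map_id

end Quantile

end ProbabilityTheory

theorem MeasureTheory.Measure.sum_restrict_preimage_singleton {α ι : Type*} [MeasurableSpace α]
    [MeasurableSpace ι] [Countable ι] [MeasurableSingletonClass ι] (μ : Measure α) {q : α → ι}
    (hq : Measurable q) : Measure.sum (fun i => μ.restrict (q ⁻¹' {i})) = μ := by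
  rw [← Measure.restrict_iUnion (pairwise_disjoint_fiber q)
    fun i => hq (measurableSet_singleton i), ← preimage_iUnion, iUnion_of_singleton,
    preimage_univ, Measure.restrict_univ]

theorem MeasureTheory.Measure.map_eq_map_snd_of_map_prodMk_eq_map_prodMap {X X' Y : Type*}
    [MeasurableSpace X] [MeasurableSpace X'] [MeasurableSpace Y] {μ : Measure X}
    {π : Measure (X × Y)} {s : X → X'} {T : X → Y} (hs : Measurable s) (hT : Measurable T)
    (h : μ.map (fun x => (s x, T x)) = π.map (Prod.map s id)) : μ.map T = π.map Prod.snd := by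
  have h' := congrArg (Measure.map Prod.snd) h
  rwa [Measure.map_map measurable_snd (hs.prodMk hT),
    Measure.map_map measurable_snd (hs.prodMap measurable_id)] at h'

section StandardBorel

variable {X Y : Type*} [MeasurableSpace X] [StandardBorelSpace X]
  [MeasurableSpace Y] [StandardBorelSpace Y]

theorem exists_measurable_map_eq_of_isProbabilityMeasure (μ : Measure X) (ν : Measure Y)
    [IsProbabilityMeasure μ] [NullSingletonClass μ] [IsProbabilityMeasure ν] :
    ∃ g : X → Y, Measurable g ∧ μ.map g = ν := by
  have : Nonempty Y := nonempty_of_isProbabilityMeasure ν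
  set eX := embeddingReal X
  set eY := embeddingReal Y
  have heX := measurableEmbedding_embeddingReal X
  have : IsProbabilityMeasure (μ.map eX) :=
    Measure.isProbabilityMeasure_map heX.measurable.aemeasurable
  have : IsProbabilityMeasure (ν.map eY) :=
    Measure.isProbabilityMeasure_map (measurable_embeddingReal Y).aemeasurable
  have : NullSingletonClass (μ.map eX) := ⟨fun r => by
    rw [Measure.map_apply heX.measurable (measurableSet_singleton r)]
    exact (subsingleton_singleton.preimage heX.injective).measure_zero μ⟩
  obtain ⟨inv, hinv, hinv_eY⟩ := (measurableEmbedding_embeddingReal Y).exists_measurable_extend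
    measurable_id fun _ => ‹Nonempty Y›
  have hF : Measurable (cdf (μ.map eX)) := (monotone_cdf _).measurable
  have hG : Measurable (quantile (ν.map eY)) := measurable_quantile _
  refine ⟨inv ∘ quantile (ν.map eY) ∘ cdf (μ.map eX) ∘ eX,
    hinv.comp (hG.comp (hF.comp heX.measurable)), ?_⟩
  calc μ.map (inv ∘ quantile (ν.map eY) ∘ cdf (μ.map eX) ∘ eX)
      = (((μ.map eX).map (cdf (μ.map eX))).map (quantile (ν.map eY))).map inv := by
        rw [Measure.map_map hG hF, Measure.map_map hinv (hG.comp hF),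
          Measure.map_map (hinv.comp (hG.comp hF)) heX.measurable]
        rfl
    _ = ν := by
        rw [map_cdf, map_quantile, Measure.map_map hinv (measurable_embeddingReal Y), hinv_eY,
          Measure.map_id]

theorem exists_measurable_map_eq_of_measure_univ_eq [Nonempty Y] (μ : Measure X) (ν : Measure Y)
    [IsFiniteMeasure μ] [NullSingletonClass μ] (h : μ univ = ν univ) :
    ∃ g : X → Y, Measurable g ∧ μ.map g = ν := by
  rcases eq_zero_or_neZero μ with hμ | hμ
  · refine ⟨fun _ => Classical.arbitrary Y, measurable_const, ?_⟩
    rw [hμ, Measure.map_zero, eq_comm, ← Measure.measure_univ_eq_zero, ← h, hμ, Measure.coe_zero,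
      Pi.zero_apply]
  have : IsFiniteMeasure ν := ⟨h ▸ measure_lt_top μ univ⟩
  have : NeZero ν := ⟨fun hν => hμ.out (by rw [← Measure.measure_univ_eq_zero, h, hν,
    Measure.coe_zero, Pi.zero_apply])⟩
  have : NullSingletonClass ((μ univ)⁻¹ • μ) := ⟨fun x => by simp⟩
  obtain ⟨g, hg, hmap⟩ := exists_measurable_map_eq_of_isProbabilityMeasure
    ((μ univ)⁻¹ • μ) ((ν univ)⁻¹ • ν)
  have hc : μ univ ≠ 0 := (Measure.measure_univ_ne_zero).2 hμ.out
  refine ⟨g, hg, ?_⟩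
  calc μ.map g = (μ univ • (μ univ)⁻¹ • μ).map g := by
        rw [smul_smul, ENNReal.mul_inv_cancel hc (measure_ne_top μ univ), one_smul]
    _ = ν := by
        rw [Measure.map_smul, hmap, h, smul_smul,
          ENNReal.mul_inv_cancel (h ▸ hc) (measure_ne_top ν univ), one_smul]

theorem exists_measurable_map_prodMk_eq_map_prodMap {ι : Type*} [MeasurableSpace ι]
    [Countable ι] [MeasurableSingletonClass ι] [Nonempty Y] (π : Measure (X × Y))
    [IsFiniteMeasure π] [NullSingletonClass (π.map Prod.fst)] {q : X → ι} (hq : Measurable q) :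
    ∃ T : X → Y, Measurable T ∧
      (π.map Prod.fst).map (fun x => (q x, T x)) = π.map (Prod.map q id) := by
  set μ := π.map Prod.fst
  have hfiber : ∀ i, MeasurableSet (q ⁻¹' {i}) := fun i => hq (measurableSet_singleton i)
  choose g hg hgmap using fun i => exists_measurable_map_eq_of_measure_univ_eq
    (μ.restrict (q ⁻¹' {i})) ((π.restrict (Prod.fst ⁻¹' (q ⁻¹' {i}))).map Prod.snd) (by
      rw [Measure.restrict_map measurable_fst (hfiber i),
        Measure.map_apply measurable_fst .univ, Measure.map_apply measurable_snd .univ]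
      rfl)
  have hT : Measurable fun x => g (q x) x :=
    (measurable_from_prod_countable_left (f := fun p : X × ι => g p.2 p.1) hg).comp
      (measurable_id.prodMk hq)
  refine ⟨fun x => g (q x) x, hT, ?_⟩
  have hpiece : ∀ i, (μ.restrict (q ⁻¹' {i})).map (fun x => (q x, g (q x) x))
      = (π.restrict ((q ∘ Prod.fst) ⁻¹' {i})).map (Prod.map q id) := fun i => calc
    (μ.restrict (q ⁻¹' {i})).map (fun x => (q x, g (q x) x))
        = (μ.restrict (q ⁻¹' {i})).map (Prod.mk i ∘ g i) :=
        Measure.map_congr <| (ae_restrict_mem (hfiber i)).mono fun x (hx : q x = i) => by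
          simp [hx]
    _ = (π.restrict ((q ∘ Prod.fst) ⁻¹' {i})).map (Prod.mk i ∘ Prod.snd) := by
        rw [← Measure.map_map measurable_prodMk_left (hg i), hgmap,
          Measure.map_map measurable_prodMk_left measurable_snd]
        rfl
    _ = (π.restrict ((q ∘ Prod.fst) ⁻¹' {i})).map (Prod.map q id) :=
        Measure.map_congr <| (ae_restrict_mem ((hfiber i).preimage measurable_fst)).mono
          fun z (hz : q z.1 = i) => Prod.ext hz.symm rfl
  calc μ.map (fun x => (q x, g (q x) x))
      = Measure.sum fun i => (μ.restrict (q ⁻¹' {i})).map (fun x => (q x, g (q x) x)) := by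
        rw [← Measure.map_sum (hq.prodMk hT).aemeasurable,
          Measure.sum_restrict_preimage_singleton μ hq]
    _ = π.map (Prod.map q id) := by
        simp_rw [hpiece]
        rw [← Measure.map_sum (hq.prodMap measurable_id).aemeasurable,
          Measure.sum_restrict_preimage_singleton π (hq.comp measurable_fst)]

end StandardBorel

theorem IsCompact.exists_measurable_dist_seq_lt {α : Type*} [PseudoMetricSpace α]
    [TopologicalSpace.SeparableSpace α] [Nonempty α] [MeasurableSpace α] [OpensMeasurableSpace α]
    {K : Set α} (hK : IsCompact K) {r : ℝ} (hr : 0 < r) :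
    ∃ (e : ℕ → α) (q : α → ℕ), Measurable q ∧ ∀ x ∈ K, dist x (e (q x)) < r := by
  set e := TopologicalSpace.denseSeq α
  obtain ⟨t, ht⟩ := hK.elim_finite_subcover (fun n => Metric.ball (e n) r)
    (fun _ => Metric.isOpen_ball) fun x _ =>
      mem_iUnion.2 ((TopologicalSpace.denseRange_denseSeq α).exists_dist_lt x hr)
  refine ⟨e, SimpleFunc.nearestPtInd e (t.sup id), (SimpleFunc.nearestPtInd e _).measurable,
    fun x hx => ?_⟩
  obtain ⟨n, hn, hxn⟩ := mem_iUnion₂.1 (ht hx)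
  have hnearest := SimpleFunc.edist_nearestPt_le e x (Finset.le_sup (f := id) hn)
  rw [SimpleFunc.nearestPt, SimpleFunc.map_apply, edist_dist, edist_dist,
    ENNReal.ofReal_le_ofReal_iff dist_nonneg] at hnearest
  rw [dist_comm]
  exact hnearest.trans_lt (by rwa [dist_comm])

theorem tendsto_integral_comp_sub_integral_comp {α β : Type*} [MeasurableSpace α]
    [PseudoMetricSpace β] [MeasurableSpace β] [OpensMeasurableSpace β] (ν : Measure α)
    [IsProbabilityMeasure ν] (f : BoundedContinuousFunction β ℝ) {K : Set β} (hK : IsCompact K)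
    {u v : ℕ → α → β} (hu : ∀ m, Measurable (u m)) (hv : ∀ m, Measurable (v m)) {r : ℕ → ℝ}
    (hr : Tendsto r atTop (𝓝 0)) (huK : ∀ m, ∀ᵐ a ∂ν, u m a ∈ K)
    (huv : ∀ m, ∀ᵐ a ∂ν, dist (u m a) (v m a) ≤ r m) :
    Tendsto (fun m => ∫ a, f (u m a) ∂ν - ∫ a, f (v m a) ∂ν) atTop (𝓝 0) := by
  rw [Metric.tendsto_atTop]
  intro ε hε
  obtain ⟨δ, hδ, hfδ⟩ := Metric.mem_uniformity_dist.1
    (hK.uniformContinuousAt_of_continuousAt f (fun _ _ => f.continuous.continuousAt)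
      (Metric.dist_mem_uniformity (half_pos hε)))
  obtain ⟨N, hN⟩ := eventually_atTop.1 (hr.eventually (gt_mem_nhds hδ))
  refine ⟨N, fun m hm => ?_⟩
  have hint : ∀ w : α → β, Measurable w → Integrable (fun a => f (w a)) ν := fun w hw =>
    (f.integrable (ν.map w)).comp_measurable hw
  rw [dist_zero_right, ← integral_sub (hint _ (hu m)) (hint _ (hv m))]
  have hbound : ∀ᵐ a ∂ν, ‖f (u m a) - f (v m a)‖ ≤ ε / 2 := by
    filter_upwards [huK m, huv m] with a haK hauv
    exact (hfδ ((hauv.trans_lt (hN m hm))) haK).le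
  calc ‖∫ a, f (u m a) - f (v m a) ∂ν‖ ≤ ε / 2 := by
        simpa using norm_integral_le_of_norm_le_const hbound
    _ < ε := half_lt_self hε

theorem exists_map_prodMk_eq_map_prodMap_of_dist_lt {X Y : Type*} [PseudoMetricSpace X]
    [TopologicalSpace.SeparableSpace X] [MeasurableSpace X] [OpensMeasurableSpace X]
    [StandardBorelSpace X] [MeasurableSpace Y] [StandardBorelSpace Y] (π : Measure (X × Y))
    [IsProbabilityMeasure π] [NullSingletonClass (π.map Prod.fst)] {K : Set X} (hK : IsCompact K)
    {r : ℝ} (hr : 0 < r) :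
    ∃ (s : X → X) (T : X → Y), Measurable s ∧ Measurable T ∧ (∀ x ∈ K, dist x (s x) < r) ∧
      (π.map Prod.fst).map (fun x => (s x, T x)) = π.map (Prod.map s id) := by
  have hne : Nonempty (X × Y) := nonempty_of_isProbabilityMeasure π
  have : Nonempty X := hne.map Prod.fst
  have : Nonempty Y := hne.map Prod.snd
  obtain ⟨e, q, hq, hdist⟩ := hK.exists_measurable_dist_seq_lt hr
  obtain ⟨T, hT, hqT⟩ := exists_measurable_map_prodMk_eq_map_prodMap π hq
  refine ⟨e ∘ q, T, measurable_from_nat.comp hq, hT, hdist, ?_⟩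
  have he : Measurable (Prod.map e (id : Y → Y)) := measurable_from_nat.prodMap measurable_id
  have h := congrArg (Measure.map (Prod.map e id)) hqT
  rwa [Measure.map_map he (hq.prodMk hT), Measure.map_map he (hq.prodMap measurable_id)] at h

theorem tendsto_integral_map_prodMk_of_map_prodMk_eq_map_prodMap {X Y : Type*} [MetricSpace X]
    [SecondCountableTopology X] [MeasurableSpace X] [OpensMeasurableSpace X]
    [MetricSpace Y] [MeasurableSpace Y] [OpensMeasurableSpace Y] (π : Measure (X × Y))
    [IsProbabilityMeasure π]
    {Kx : Set X} {Ky : Set Y} (hKx : IsCompact Kx) (hKy : IsCompact Ky)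
    (hπK : ∀ᵐ z ∂π, z ∈ Kx ×ˢ Ky) {s : ℕ → X → X} {T : ℕ → X → Y} (hs : ∀ m, Measurable (s m))
    (hT : ∀ m, Measurable (T m)) {r : ℕ → ℝ} (hr : Tendsto r atTop (𝓝 0))
    (hsr : ∀ m, ∀ x ∈ Kx, dist x (s m x) ≤ r m)
    (hsT : ∀ m, (π.map Prod.fst).map (fun x => (s m x, T m x)) = π.map (Prod.map (s m) id))
    (f : BoundedContinuousFunction (X × Y) ℝ) :
    Tendsto (fun m => ∫ z, f z ∂((π.map Prod.fst).map fun x => (x, T m x))) atTop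
      (𝓝 (∫ z, f z ∂π)) := by
  set μ := π.map Prod.fst
  have : IsProbabilityMeasure μ := Measure.isProbabilityMeasure_map measurable_fst.aemeasurable
  have hgraph : ∀ m, Measurable fun x => (x, T m x) := fun m => measurable_id.prodMk (hT m)
  have hμK : ∀ᵐ x ∂μ, x ∈ Kx :=
    (ae_map_iff measurable_fst.aemeasurable hKx.measurableSet).2 (hπK.mono fun z hz => hz.1)
  have hTK : ∀ m, ∀ᵐ x ∂μ, T m x ∈ Ky := fun m => by
    refine (ae_map_iff (hT m).aemeasurable hKy.measurableSet).1 ?_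
    rw [Measure.map_eq_map_snd_of_map_prodMk_eq_map_prodMap (hs m) (hT m) (hsT m)]
    exact (ae_map_iff measurable_snd.aemeasurable hKy.measurableSet).2 (hπK.mono fun z hz => hz.2)
  have hμ := tendsto_integral_comp_sub_integral_comp μ f (hKx.prod hKy)
    (u := fun m x => (x, T m x)) (v := fun m x => (s m x, T m x))
    hgraph (fun m => (hs m).prodMk (hT m)) hr (fun m => hμK.and (hTK m))
    (fun m => hμK.mono fun x hx => by simpa [Prod.dist_eq] using hsr m x hx)
  have hπ := tendsto_integral_comp_sub_integral_comp π f (hKx.prod hKy)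
    (u := fun _ z => z) (v := fun m z => (s m z.1, z.2))
    (fun _ => measurable_id) (fun m => (hs m).prodMap measurable_id) hr (fun _ => hπK)
    (fun m => hπK.mono fun z hz => by simpa [Prod.dist_eq] using hsr m z.1 hz.1)
  have hmid : ∀ m, ∫ x, f (s m x, T m x) ∂μ = ∫ z, f (s m z.1, z.2) ∂π := fun m => by
    rw [← integral_map ((hs m).prodMk (hT m)).aemeasurable f.continuous.aestronglyMeasurable,
      hsT m, integral_map ((hs m).prodMap measurable_id).aemeasurable
        f.continuous.aestronglyMeasurable]
    rfl
  rw [← tendsto_sub_nhds_zero_iff]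
  refine ((sub_zero (0 : ℝ)) ▸ hμ.sub hπ).congr fun m => ?_
  rw [integral_map (hgraph m).aemeasurable f.continuous.aestronglyMeasurable, hmid m]
  ring

theorem stmt_10 (d p : ℕ)
    (Ωd : Set (EuclideanSpace ℝ (Fin d))) (Ωp : Set (EuclideanSpace ℝ (Fin p)))
    (hΩd : IsCompact Ωd) (hΩp : IsCompact Ωp)
    (π : Measure (EuclideanSpace ℝ (Fin d) × EuclideanSpace ℝ (Fin p)))
    [IsProbabilityMeasure π]
    (hsupp : π (Ωd ×ˢ Ωp) = 1)
    (hatomless : ∀ x, Measure.map Prod.fst π {x} = 0) :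
    ∃ T : ℕ → EuclideanSpace ℝ (Fin d) → EuclideanSpace ℝ (Fin p),
      (∀ m, Measurable (T m)) ∧
      (∀ m, Measure.map (T m) (Measure.map Prod.fst π) = Measure.map Prod.snd π) ∧
      (∀ f : BoundedContinuousFunction
          (EuclideanSpace ℝ (Fin d) × EuclideanSpace ℝ (Fin p)) ℝ,
        Tendsto (fun m =>
            ∫ z, f z ∂(Measure.map (fun x => (x, T m x)) (Measure.map Prod.fst π)))
          atTop (nhds (∫ z, f z ∂π))) := by
  have : NullSingletonClass (π.map Prod.fst) := ⟨hatomless⟩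
  have hπK : ∀ᵐ z ∂π, z ∈ Ωd ×ˢ Ωp :=
    mem_ae_iff.2 ((prob_compl_eq_zero_iff (hΩd.measurableSet.prod hΩp.measurableSet)).2 hsupp)
  choose s T hs hT hsr hsT using fun m : ℕ =>
    exists_map_prodMk_eq_map_prodMap_of_dist_lt π hΩd (Nat.one_div_pos_of_nat (n := m))
  exact ⟨T, hT,
    fun m => Measure.map_eq_map_snd_of_map_prodMk_eq_map_prodMap (hs m) (hT m) (hsT m),
    tendsto_integral_map_prodMk_of_map_prodMk_eq_map_prodMap π hΩd hΩp hπK hs hT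
      tendsto_one_div_add_atTop_nhds_zero_nat (fun m x hx => (hsr m x hx).le) hsT⟩
end
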